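/- Let Ĥ = [e, H] ∈ ℝ^{N×(n+1)} with full column rank, μ = (1/N)H^T e ≠ 0, and U = [[1, -μ^T],[0, I_n]]. Let x_max be an eigenvector of (H - eμ^T)^T(H - eμ^T) corresponding to its largest eigenvalue. If μ^T x_max ≠ 0, then λ_max(U^T Ĥ^T Ĥ U) < λ_max(Ĥ^T Ĥ) strictly, and hence κ(ĤU) < κ(Ĥ). -/

import Mathlib

/-!
Write `A = ĤᵀĤ` and `y = U (t, x)`. Then `yᵀ A y = N t² + xᵀ M x` and
`|y|² = (t - μᵀx)² + |x|²`, so the Rayleigh quotient of `A` compares the spectra of `A` and of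
`UᵀAU = diag(N, M)`. For `x = x_max` the bound `yᵀ A y ≤ λ_max(A) |y|²` holds for every `t`:
at `t = μᵀx` it gives `λ_max(A) > λ_max(M)`, and as a quadratic inequality in `t` its
discriminant must be nonpositive, which gives `λ_max(A) > N`. The choices `(t, x) = (1, 0)` and
`(0, w)`, `w` an eigenvector for `λ_min(M)`, give `λ_min(A) ≤ min(N, λ_min(M)) = λ_min(UᵀAU)`,
so the condition number decreases as well.
-/

open Matrix

/-- The set of eigenvalues of a real square matrix. -/
noncomputable def eigs {m : ℕ} (A : Matrix (Fin m) (Fin m) ℝ) : Set ℝ :=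
  {μ | ∃ v : Fin m → ℝ, v ≠ 0 ∧ A.mulVec v = μ • v}

noncomputable def lamMax {m : ℕ} (A : Matrix (Fin m) (Fin m) ℝ) : ℝ := sSup (eigs A)

/-- Ĥ = [e, H] : prepend a column of ones to H -/
noncomputable def hatM {N n : ℕ} (H : Matrix (Fin N) (Fin n) ℝ) :
    Matrix (Fin N) (Fin (n + 1)) ℝ :=
  Matrix.of fun i j => Fin.cases (motive := fun _ => ℝ) 1 (fun j' => H i j') j

/-- U = [[1, -μᵀ],[0, I]] : the centering transformation -/
noncomputable def centerU {n : ℕ} (μ : Fin n → ℝ) : Matrix (Fin (n + 1)) (Fin (n + 1)) ℝ :=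
  Matrix.of fun i j =>
    Fin.cases (motive := fun _ => ℝ)
      (Fin.cases (motive := fun _ => ℝ) 1 (fun j' => -μ j') j)
      (fun i' => Fin.cases (motive := fun _ => ℝ) 0 (fun j' => if i' = j' then 1 else 0) j) i


noncomputable def lamMin {m : ℕ} (A : Matrix (Fin m) (Fin m) ℝ) : ℝ := sInf (eigs A)

/-- 2-norm condition number σ_max/σ_min of a full column rank matrix -/
noncomputable def condFull {m n : ℕ} (A : Matrix (Fin m) (Fin n) ℝ) : ℝ :=
  Real.sqrt (lamMax (Aᵀ * A) / lamMin (Aᵀ * A))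


section Eigenvalues

variable {m : ℕ} {A : Matrix (Fin m) (Fin m) ℝ}

variable (A) in
lemma eigs_eq_spectrum : eigs A = spectrum ℝ A := by
  ext ν
  rw [← spectrum_toLin', ← Module.End.hasEigenvalue_iff_mem_spectrum]
  constructor
  · rintro ⟨v, hv, hAv⟩
    exact Module.End.hasEigenvalue_of_hasEigenvector
      ⟨Module.End.mem_eigenspace_iff.2 (by simpa using hAv), hv⟩
  · intro h
    obtain ⟨v, hv_mem, hv⟩ := h.exists_hasEigenvector
    exact ⟨v, hv, by simpa using Module.End.mem_eigenspace_iff.1 hv_mem⟩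

variable (A) in
lemma eigs_finite : (eigs A).Finite :=
  eigs_eq_spectrum A ▸ A.finite_spectrum

lemma le_lamMax {ν : ℝ} (h : ν ∈ eigs A) : ν ≤ lamMax A :=
  le_csSup (eigs_finite A).bddAbove h

lemma lamMin_le {ν : ℝ} (h : ν ∈ eigs A) : lamMin A ≤ ν :=
  csInf_le (eigs_finite A).bddBelow h

lemma lamMax_mem_eigs (h : (eigs A).Nonempty) : lamMax A ∈ eigs A :=
  h.csSup_mem (eigs_finite A)

lemma lamMin_mem_eigs (h : (eigs A).Nonempty) : lamMin A ∈ eigs A :=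
  h.csInf_mem (eigs_finite A)

lemma Matrix.PosDef.pos_of_mem_eigs (hA : A.PosDef) {ν : ℝ} (h : ν ∈ eigs A) : 0 < ν := by
  obtain ⟨v, hv, hAv⟩ := h
  have hpos := hA.dotProduct_mulVec_pos hv
  rw [star_trivial, hAv, dotProduct_smul, smul_eq_mul] at hpos
  exact pos_of_mul_pos_left hpos (dotProduct_self_star_nonneg v)

lemma Matrix.IsHermitian.dotProduct_mulVec_le (hA : A.IsHermitian) {c : ℝ}
    (hc : ∀ ν ∈ eigs A, ν ≤ c) (v : Fin m → ℝ) :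
    v ⬝ᵥ A *ᵥ v ≤ c * (v ⬝ᵥ v) := by
  have hB : (c • 1 - A).IsHermitian := (isHermitian_one.smul (IsSelfAdjoint.all c)).sub hA
  have hpsd : (c • 1 - A).PosSemidef := by
    refine hB.posSemidef_iff_eigenvalues_nonneg.2 fun i => ?_
    have hAu : A *ᵥ hB.eigenvectorBasis i = (c - hB.eigenvalues i) • hB.eigenvectorBasis i := by
      have := hB.mulVec_eigenvectorBasis i
      rw [sub_mulVec, smul_mulVec, one_mulVec] at this
      rw [sub_smul, ← this]; abel
    have := hc _ ⟨_, by simpa using hB.eigenvectorBasis.orthonormal.ne_zero i, hAu⟩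
    simp only [Pi.zero_apply]; linarith
  have := hpsd.dotProduct_mulVec_nonneg v
  rw [star_trivial, sub_mulVec, smul_mulVec, one_mulVec, dotProduct_sub, dotProduct_smul,
    smul_eq_mul] at this
  linarith

lemma Matrix.IsHermitian.dotProduct_mulVec_le_lamMax
    (hA : A.IsHermitian) (v : Fin m → ℝ) : v ⬝ᵥ A *ᵥ v ≤ lamMax A * (v ⬝ᵥ v) :=
  hA.dotProduct_mulVec_le (fun _ => le_lamMax) v

lemma Matrix.IsHermitian.lamMin_mul_le_dotProduct_mulVec
    (hA : A.IsHermitian) (v : Fin m → ℝ) : lamMin A * (v ⬝ᵥ v) ≤ v ⬝ᵥ A *ᵥ v := by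
  have hneg : ∀ ν ∈ eigs (-A), ν ≤ -lamMin A := fun ν ⟨w, hw, hAw⟩ => by
    have : -ν ∈ eigs A := ⟨w, hw, by rw [neg_smul, ← hAw, neg_mulVec, neg_neg]⟩
    linarith [lamMin_le this]
  have := hA.neg.dotProduct_mulVec_le hneg v
  rw [neg_mulVec, dotProduct_neg] at this
  linarith

end Eigenvalues

lemma Matrix.IsHermitian.eigs_nonempty {m : ℕ} {A : Matrix (Fin (m + 1)) (Fin (m + 1)) ℝ}
    (hA : A.IsHermitian) : (eigs A).Nonempty :=
  ⟨_, (eigs_eq_spectrum A).symm ▸ hA.eigenvalues_mem_spectrum_real 0⟩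

section BlockDiagonal

variable {n : ℕ}

/-- The block diagonal matrix `[[a, 0], [0, M]]`. -/
def blockDiagCons (a : ℝ) (M : Matrix (Fin n) (Fin n) ℝ) : Matrix (Fin (n + 1)) (Fin (n + 1)) ℝ :=
  Matrix.of (vecCons (vecCons a 0) fun i => vecCons 0 (M i))

lemma blockDiagCons_mulVec_cons (a : ℝ) (M : Matrix (Fin n) (Fin n) ℝ) (t : ℝ) (x : Fin n → ℝ) :
    blockDiagCons a M *ᵥ vecCons t x = vecCons (a * t) (M *ᵥ x) := by
  ext i
  refine Fin.cases ?_ (fun i => ?_) i <;>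
    simp [blockDiagCons, mulVec]

lemma eigs_blockDiagCons (a : ℝ) (M : Matrix (Fin n) (Fin n) ℝ) :
    eigs (blockDiagCons a M) = insert a (eigs M) := by
  ext ν
  constructor
  · rintro ⟨v, hv, hDv⟩
    rw [← cons_head_tail v, blockDiagCons_mulVec_cons, smul_cons, vecCons_inj] at hDv
    by_cases hv₀ : vecHead v = 0
    · refine Or.inr ⟨vecTail v, fun h => hv ?_, hDv.2⟩
      rw [← cons_head_tail v, hv₀, h, cons_zero_zero]
    · exact Or.inl (mul_right_cancel₀ hv₀ hDv.1).symm
  · rintro (rfl | ⟨w, hw, hMw⟩)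
    · exact ⟨vecCons 1 0, by simp, by simp [blockDiagCons_mulVec_cons]⟩
    · exact ⟨vecCons 0 w, by simpa using hw, by simp [blockDiagCons_mulVec_cons, hMw]⟩

lemma lamMax_blockDiagCons (a : ℝ) {M : Matrix (Fin n) (Fin n) ℝ} (hM : (eigs M).Nonempty) :
    lamMax (blockDiagCons a M) = max a (lamMax M) := by
  rw [lamMax, eigs_blockDiagCons, csSup_insert (eigs_finite M).bddAbove hM]
  rfl

lemma lamMin_blockDiagCons (a : ℝ) {M : Matrix (Fin n) (Fin n) ℝ} (hM : (eigs M).Nonempty) :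
    lamMin (blockDiagCons a M) = min a (lamMin M) := by
  rw [lamMin, eigs_blockDiagCons, csInf_insert (eigs_finite M).bddBelow hM]
  rfl

lemma cons_dotProduct_blockDiagCons_mulVec_cons (a : ℝ) (M : Matrix (Fin n) (Fin n) ℝ) (t : ℝ)
    (x : Fin n → ℝ) :
    vecCons t x ⬝ᵥ blockDiagCons a M *ᵥ vecCons t x = a * t ^ 2 + x ⬝ᵥ M *ᵥ x := by
  rw [blockDiagCons_mulVec_cons, cons_dotProduct_cons]
  ring

end BlockDiagonal

lemma centerU_mulVec_cons {n : ℕ} (μ : Fin n → ℝ) (t : ℝ) (x : Fin n → ℝ) :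
    centerU μ *ᵥ vecCons t x = vecCons (t - μ ⬝ᵥ x) x := by
  ext i
  refine Fin.cases ?_ (fun i => ?_) i
  · simp [centerU, mulVec, dotProduct, Fin.sum_univ_succ, sub_eq_add_neg]
  · simp [centerU, mulVec, dotProduct, Fin.sum_univ_succ]

lemma dotProduct_mulVec_mulVec_conj {m k : ℕ} (A : Matrix (Fin m) (Fin m) ℝ)
    (U : Matrix (Fin m) (Fin k) ℝ) (y : Fin k → ℝ) :
    (U *ᵥ y) ⬝ᵥ A *ᵥ (U *ᵥ y) = y ⬝ᵥ (Uᵀ * A * U) *ᵥ y := by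
  rw [← mulVec_mulVec, ← mulVec_mulVec, dotProduct_mulVec y Uᵀ, vecMul_transpose]

section Centering

variable {n : ℕ} {A : Matrix (Fin (n + 1)) (Fin (n + 1)) ℝ} {μ : Fin n → ℝ} {a : ℝ}
  {M : Matrix (Fin n) (Fin n) ℝ}

lemma dotProduct_mulVec_centerU_cons (hG : (centerU μ)ᵀ * A * centerU μ = blockDiagCons a M)
    (t : ℝ) (x : Fin n → ℝ) :
    (centerU μ *ᵥ vecCons t x) ⬝ᵥ A *ᵥ (centerU μ *ᵥ vecCons t x) = a * t ^ 2 + x ⬝ᵥ M *ᵥ x := by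
  rw [dotProduct_mulVec_mulVec_conj, hG, cons_dotProduct_blockDiagCons_mulVec_cons]

lemma centerU_mulVec_cons_dotProduct_self (t : ℝ) (x : Fin n → ℝ) :
    (centerU μ *ᵥ vecCons t x) ⬝ᵥ (centerU μ *ᵥ vecCons t x) = (t - μ ⬝ᵥ x) ^ 2 + x ⬝ᵥ x := by
  rw [centerU_mulVec_cons, cons_dotProduct_cons, sq]

lemma max_lt_lamMax_of_conj_centerU (hA : A.PosDef)
    (hG : (centerU μ)ᵀ * A * centerU μ = blockDiagCons a M) (ha : 0 < a) {x : Fin n → ℝ}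
    (hx : x ≠ 0) (hMx : M *ᵥ x = lamMax M • x) (hμx : μ ⬝ᵥ x ≠ 0) :
    max a (lamMax M) < lamMax A := by
  set K := lamMax A
  set c := μ ⬝ᵥ x
  set S := x ⬝ᵥ x
  have hS : 0 < S := by simpa using dotProduct_self_star_pos_iff.2 hx
  have hc : 0 < c ^ 2 := by positivity
  have hK : 0 < K := hA.pos_of_mem_eigs (lamMax_mem_eigs hA.1.eigs_nonempty)
  have hquad : ∀ t, a * t ^ 2 + lamMax M * S ≤ K * ((t - c) ^ 2 + S) := fun t => by
    have := hA.1.dotProduct_mulVec_le_lamMax (centerU μ *ᵥ vecCons t x)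
    rwa [dotProduct_mulVec_centerU_cons hG, centerU_mulVec_cons_dotProduct_self, hMx,
      dotProduct_smul, smul_eq_mul] at this
  have hKM : lamMax M < K := by nlinarith [hquad c, mul_pos ha hc]
  have hdisc := discrim_le_zero (a := K - a) (b := -2 * K * c)
    (c := K * c ^ 2 + (K - lamMax M) * S) fun t => by nlinarith [hquad t]
  rw [discrim] at hdisc
  have hKa : a < K := by
    nlinarith [mul_pos (mul_pos hK hK) hc, mul_pos hK hc, mul_pos (sub_pos.2 hKM) hS]
  exact max_lt hKa hKM

lemma lamMin_le_min_of_conj_centerU (hA : A.PosDef)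
    (hG : (centerU μ)ᵀ * A * centerU μ = blockDiagCons a M) (hM : (eigs M).Nonempty) :
    lamMin A ≤ min a (lamMin M) := by
  have hk : 0 < lamMin A := hA.pos_of_mem_eigs (lamMin_mem_eigs hA.1.eigs_nonempty)
  have hRayleigh := fun t x => hA.1.lamMin_mul_le_dotProduct_mulVec (centerU μ *ᵥ vecCons t x)
  refine le_min ?_ ?_
  · have := hRayleigh 1 0
    rw [dotProduct_mulVec_centerU_cons hG, centerU_mulVec_cons_dotProduct_self] at this
    simpa using this
  · obtain ⟨w, hw, hMw⟩ := lamMin_mem_eigs hM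
    have hS : 0 < w ⬝ᵥ w := by simpa using dotProduct_self_star_pos_iff.2 hw
    have := hRayleigh 0 w
    rw [dotProduct_mulVec_centerU_cons hG, centerU_mulVec_cons_dotProduct_self, hMw,
      dotProduct_smul, smul_eq_mul] at this
    nlinarith [sq_nonneg (0 - μ ⬝ᵥ w)]

end Centering

lemma Matrix.mulVec_injective_of_rank_eq {m k : ℕ} {B : Matrix (Fin m) (Fin k) ℝ}
    (h : B.rank = k) : Function.Injective B.mulVec := by
  rw [mulVec_injective_iff, linearIndependent_iff_card_eq_finrank_span, Fintype.card_fin,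
    Set.finrank, ← rank_eq_finrank_span_cols, h]

lemma hatM_mul_centerU {N n : ℕ} (H : Matrix (Fin N) (Fin n) ℝ) (μ : Fin n → ℝ) :
    hatM H * centerU μ = Matrix.of fun i => vecCons 1 (H i - μ) := by
  ext i j
  refine Fin.cases ?_ (fun j => ?_) j
  · simp [hatM, centerU, mul_apply, Fin.sum_univ_succ]
  · simp [hatM, centerU, mul_apply, Fin.sum_univ_succ, mul_ite, sub_eq_neg_add]

lemma hatM_mul_centerU_gram {N n : ℕ} (H : Matrix (Fin N) (Fin n) ℝ) (μ : Fin n → ℝ)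
    (hN : (N : ℝ) ≠ 0) (hμ : ∀ j, μ j = (1 / (N : ℝ)) * ∑ i, H i j) :
    (hatM H * centerU μ)ᵀ * (hatM H * centerU μ) =
      blockDiagCons N ((H - Matrix.of fun _ j => μ j)ᵀ * (H - Matrix.of fun _ j => μ j)) := by
  have hsum : ∀ j, ∑ i, H i j = N * μ j := fun j => by rw [hμ]; field_simp
  rw [hatM_mul_centerU]
  ext i j
  refine Fin.cases (Fin.cases ?_ (fun j => ?_) j) (fun i => Fin.cases ?_ (fun j => ?_) j) i <;>
    simp [blockDiagCons, mul_apply, Finset.sum_sub_distrib, hsum]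

theorem stmt4_general {N n : ℕ} (H : Matrix (Fin N) (Fin n) ℝ)
    (μ : Fin n → ℝ) (hμ' : ∀ j, μ j = (1 / (N : ℝ)) * ∑ i, H i j)
    (hrank : (hatM H).rank = n + 1)
    -- M := (H - eμᵀ)ᵀ(H - eμᵀ), the sample (unnormalized) covariance matrix
    (M : Matrix (Fin n) (Fin n) ℝ)
    (hM : M = (H - Matrix.of fun _ j => μ j)ᵀ * (H - Matrix.of fun _ j => μ j))
    (xmax : Fin n → ℝ) (hx0 : xmax ≠ 0)
    (hxeig : M.mulVec xmax = lamMax M • xmax)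
    (hortho : μ ⬝ᵥ xmax ≠ 0) :
    lamMax ((centerU μ)ᵀ * (hatM H)ᵀ * hatM H * centerU μ) <
        lamMax ((hatM H)ᵀ * hatM H) ∧
      condFull (hatM H * centerU μ) < condFull (hatM H) := by
  have hN : (0 : ℝ) < N := by
    have := hrank ▸ rank_le_card_height (hatM H)
    simp only [Fintype.card_fin] at this
    exact_mod_cast (Nat.succ_pos n).trans_le this
  have hA : ((hatM H)ᵀ * hatM H).PosDef := by
    simpa using PosDef.conjTranspose_mul_self _ (mulVec_injective_of_rank_eq hrank)
  have hgram := hM ▸ hatM_mul_centerU_gram H μ hN.ne' hμ'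
  have hG : (centerU μ)ᵀ * ((hatM H)ᵀ * hatM H) * centerU μ = blockDiagCons N M := by
    rw [← hgram, transpose_mul, Matrix.mul_assoc, Matrix.mul_assoc, Matrix.mul_assoc]
  have hmaxpos : 0 < max (N : ℝ) (lamMax M) := hN.trans_le (le_max_left _ _)
  have heigs : (eigs M).Nonempty := ⟨_, xmax, hx0, hxeig⟩
  have hmax := max_lt_lamMax_of_conj_centerU hA hG hN hx0 hxeig hortho
  have hmin := lamMin_le_min_of_conj_centerU hA hG heigs
  have hk : 0 < lamMin ((hatM H)ᵀ * hatM H) :=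
    hA.pos_of_mem_eigs (lamMin_mem_eigs hA.1.eigs_nonempty)
  refine ⟨?_, ?_⟩
  · rwa [Matrix.mul_assoc (centerU μ)ᵀ, hG, lamMax_blockDiagCons _ heigs]
  · rw [condFull, condFull, hgram, lamMax_blockDiagCons _ heigs, lamMin_blockDiagCons _ heigs]
    exact Real.sqrt_lt_sqrt (div_nonneg hmaxpos.le (hk.trans_le hmin).le)
      (div_lt_div₀ hmax hmin (hmaxpos.trans hmax).le hk)

theorem stmt4 {N n : ℕ} (H : Matrix (Fin N) (Fin n) ℝ)
    (μ : Fin n → ℝ) (hμ' : ∀ j, μ j = (1 / (N : ℝ)) * ∑ i, H i j)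
    (hrank : (hatM H).rank = n + 1) (hμ0 : μ ≠ 0)
    -- M := (H - eμᵀ)ᵀ(H - eμᵀ), the sample (unnormalized) covariance matrix
    (M : Matrix (Fin n) (Fin n) ℝ)
    (hM : M = (H - Matrix.of fun _ j => μ j)ᵀ * (H - Matrix.of fun _ j => μ j))
    (xmax : Fin n → ℝ) (hx0 : xmax ≠ 0)
    (hxeig : M.mulVec xmax = lamMax M • xmax)
    (hortho : μ ⬝ᵥ xmax ≠ 0) :
    lamMax ((centerU μ)ᵀ * (hatM H)ᵀ * hatM H * centerU μ) <
        lamMax ((hatM H)ᵀ * hatM H) ∧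
      condFull (hatM H * centerU μ) < condFull (hatM H) :=
  stmt4_general H μ hμ' hrank M hM xmax hx0 hxeig hortho
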